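/- Let U be a nonempty open subset of ℝ^d and let (x_n)_{n≥1} be a sequence of points in ℝ^d. If there exists a nonempty dyadic cube λ ⊆ U such that liminf_{j→∞} 2^{−dj}·#M((x_n)_{n≥1}; λ, j) = 0, then the sequence (x_n)_{n≥1} is not uniformly eutaxic in U. -/

import Mathlib

open MeasureTheory Filter Set
open scoped Topology ENNReal

noncomputable section

/-- The collection `P_d` of nonincreasing positive sequences converging to `0` whose
`d`-th powers have divergent sum. -/
def Pd (d : ℕ) : Set (ℕ → ℝ) :=
  {r | (∀ n, 0 < r n) ∧ (∀ n, r (n + 1) ≤ r n) ∧ Tendsto r atTop (𝓝 0) ∧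
    ¬ Summable fun n => r n ^ d}

/-- A sequence of points of `ℝ^d` is eutaxic in an open set `U` with respect to a sequence
of radii `r` if Lebesgue-almost every `y ∈ U` satisfies `|y - x_n| < r_n` for infinitely
many `n ≥ 1`. -/
def Eutaxic {d : ℕ} (x : ℕ → Fin d → ℝ) (U : Set (Fin d → ℝ)) (r : ℕ → ℝ) : Prop :=
  ∀ᵐ y ∂(volume.restrict U), {n : ℕ | 1 ≤ n ∧ ‖y - x n‖ < r n}.Infinite

/-- A sequence is uniformly eutaxic in `U` if it is eutaxic in `U` with respect to every
sequence in `P_d`. -/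
def UnifEutaxic {d : ℕ} (x : ℕ → Fin d → ℝ) (U : Set (Fin d → ℝ)) : Prop :=
  ∀ r ∈ Pd d, Eutaxic x U r

/-- The dyadic cube `2^{-j}(k + [0,1)^d)` of `ℝ^d`. -/
def dyadicCube (d : ℕ) (j : ℤ) (k : Fin d → ℤ) : Set (Fin d → ℝ) :=
  {x | ∀ i, (k i : ℝ) * 2 ^ (-j) ≤ x i ∧ x i < ((k i : ℝ) + 1) * 2 ^ (-j)}

/-- The family `M((x_n); λ, m)` (indexed by the integer points `k'` parametrizing the
cubes): the dyadic subcubes of `λ = dyadicCube d j k` with generation `j + m` containing a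
point `x_n` for some `1 ≤ n ≤ 2^{d(j+m)}`. -/
def MSet {d : ℕ} (x : ℕ → Fin d → ℝ) (j : ℤ) (k : Fin d → ℤ) (m : ℕ) :
    Set (Fin d → ℤ) :=
  {k' | dyadicCube d (j + m) k' ⊆ dyadicCube d j k ∧
    ∃ n : ℕ, 1 ≤ n ∧ (n : ℝ) ≤ (2 : ℝ) ^ ((d : ℤ) * (j + m)) ∧
      x n ∈ dyadicCube d (j + m) k'}


lemma dyadicCube_eq_pi (d : ℕ) (j : ℤ) (k : Fin d → ℤ) :
    dyadicCube d j k =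
      Set.univ.pi fun i => Set.Ico ((k i : ℝ) * 2 ^ (-j)) (((k i : ℝ) + 1) * 2 ^ (-j)) := by
  ext y; simp [dyadicCube, Set.mem_pi]

lemma volume_dyadicCube (d : ℕ) (j : ℤ) (k : Fin d → ℤ) :
    volume (dyadicCube d j k) = ENNReal.ofReal ((2:ℝ) ^ (-j)) ^ d := by
  rw [dyadicCube_eq_pi, volume_pi_pi]
  have e : ∀ i : Fin d, ((k i : ℝ) + 1) * 2 ^ (-j) - (k i : ℝ) * 2 ^ (-j) = 2 ^ (-j) := by
    intro i; ring
  simp only [Real.volume_Ico, e, Finset.prod_const, Finset.card_univ, Fintype.card_fin]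

lemma tpa (e f : ℤ) : (2:ℝ)^e * (2:ℝ)^f = 2^(e+f) := (zpow_add₀ two_ne_zero e f).symm

lemma tppos (e : ℤ) : (0:ℝ) < 2^e := zpow_pos two_pos e

lemma mem_dyadicCube_iff {d : ℕ} {j : ℤ} {k : Fin d → ℤ} {y : Fin d → ℝ} :
    y ∈ dyadicCube d j k ↔ ∀ i, (k i : ℝ) ≤ y i * 2 ^ j ∧ y i * 2 ^ j < (k i : ℝ) + 1 := by
  have key : ∀ (a z : ℝ), (a * 2^(-j) ≤ z ↔ a ≤ z * 2^j) ∧ (z < a * 2^(-j) ↔ z * 2^j < a) := by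
    intro a z
    rw [zpow_neg, ← div_eq_mul_inv, div_le_iff₀ (tppos j), lt_div_iff₀ (tppos j)]
    constructor
    · constructor <;> intro h <;> linarith
    · constructor <;> intro h <;> linarith
  constructor
  · intro h i; exact ⟨((key _ _).1).mp (h i).1, ((key _ _).2).mp (h i).2⟩
  · intro h i; exact ⟨((key _ _).1).mpr (h i).1, ((key _ _).2).mpr (h i).2⟩

lemma scale_iff {j : ℤ} {m : ℕ} (z a : ℝ) :
    (a ≤ z * 2 ^ (j + (m:ℤ)) ↔ a * 2^(-(m:ℤ)) ≤ z * 2 ^ j) ∧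
    (z * 2 ^ (j + (m:ℤ)) < a ↔ z * 2 ^ j < a * 2^(-(m:ℤ))) := by
  have h1 : z * 2 ^ (j + (m:ℤ)) = (z * 2^j) * 2^(m:ℤ) := by
    rw [mul_assoc, tpa]
  have hm : (0:ℝ) < 2^(m:ℤ) := tppos _
  have h2 : a * 2^(-(m:ℤ)) = a / 2^(m:ℤ) := by rw [zpow_neg, div_eq_mul_inv]
  rw [h1, h2, div_le_iff₀ hm, lt_div_iff₀ hm]
  tauto

/-- subset criterion -/
lemma cube_subset {d : ℕ} {j : ℤ} {k : Fin d → ℤ} {m : ℕ} {k' : Fin d → ℤ}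
    (h : ∀ i, (k i : ℝ) * 2^m ≤ k' i ∧ (k' i : ℝ) + 1 ≤ ((k i : ℝ) + 1) * 2^m) :
    dyadicCube d (j + m) k' ⊆ dyadicCube d j k := by
  intro z hz
  rw [mem_dyadicCube_iff] at hz ⊢
  intro i
  obtain ⟨h1, h2⟩ := hz i
  obtain ⟨h3, h4⟩ := h i
  have hm : (0:ℝ) < 2^(m:ℤ) := tppos _
  have e1 : z i * 2 ^ (j + (m:ℤ)) = (z i * 2^j) * 2^(m:ℤ) := by rw [mul_assoc, tpa]
  rw [e1] at h1 h2
  have hcast : ((2:ℝ)^m : ℝ) = 2^(m:ℤ) := by rw [zpow_natCast]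
  rw [hcast] at h3 h4
  constructor
  · exact le_of_mul_le_mul_right (le_trans h3 h1) hm
  · exact lt_of_mul_lt_mul_right (lt_of_lt_of_le h2 h4) hm.le

/-- the floor-cube of a point, and its compatibility -/
lemma floor_mem {d : ℕ} (e : ℤ) (z : Fin d → ℝ) :
    z ∈ dyadicCube d e (fun i => ⌊z i * 2^e⌋) := by
  rw [mem_dyadicCube_iff]
  intro i
  exact ⟨Int.floor_le _, Int.lt_floor_add_one _⟩

lemma corner_mem (d : ℕ) (j : ℤ) (k : Fin d → ℤ) :
    (fun i => (k i : ℝ) * 2 ^ (-j)) ∈ dyadicCube d j k := by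
  intro i
  refine ⟨le_refl _, ?_⟩
  have h2 : (0:ℝ) < 2 ^ (-j) := tppos _
  show (k i : ℝ) * 2 ^ (-j) < ((k i : ℝ) + 1) * 2 ^ (-j)
  nlinarith

/-- bounds on indices of subcubes -/
lemma sub_bounds {d : ℕ} {j : ℤ} {k k' : Fin d → ℤ} {m : ℕ}
    (h : dyadicCube d (j + m) k' ⊆ dyadicCube d j k) (i : Fin d) :
    k i * 2^m ≤ k' i ∧ k' i + 1 ≤ (k i + 1) * 2^m := by
  have hc := h (corner_mem d (j + m) k')
  rw [mem_dyadicCube_iff] at hc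
  obtain ⟨h1, h2⟩ := hc i
  have e1 : ((k' i : ℝ) * 2 ^ (-(j + (m:ℤ)))) * 2^j = (k' i : ℝ) * 2^(-(m:ℤ)) := by
    rw [mul_assoc, tpa]; ring_nf
  rw [e1] at h1 h2
  have hm : (0:ℝ) < 2^(m:ℤ) := tppos _
  have h2m : (k' i : ℝ) * 2^(-(m:ℤ)) = (k' i : ℝ) / 2^(m:ℤ) := by rw [zpow_neg, div_eq_mul_inv]
  rw [h2m, le_div_iff₀ hm] at h1
  rw [h2m, div_lt_iff₀ hm] at h2
  have hcast : ((2:ℝ)^(m:ℤ)) = ((2^m : ℤ) : ℝ) := by rw [zpow_natCast]; norm_cast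
  rw [hcast] at h1 h2
  constructor
  · exact_mod_cast h1
  · have : (k' i : ℤ) < (k i + 1) * 2^m := by exact_mod_cast h2
    omega

lemma mset_subset {d : ℕ} (x : ℕ → Fin d → ℝ) (j : ℤ) (k : Fin d → ℤ) (m : ℕ) :
    MSet x j k m ⊆
      ↑(Fintype.piFinset fun i => Finset.Ico (k i * 2 ^ m) ((k i + 1) * 2 ^ m)) := by
  intro k' hk'
  simp only [Finset.coe_sort_coe, Finset.mem_coe, Fintype.mem_piFinset, Finset.mem_Ico]
  intro i
  obtain ⟨h1, h2⟩ := sub_bounds hk'.1 i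
  omega

lemma mset_finite {d : ℕ} (x : ℕ → Fin d → ℝ) (j : ℤ) (k : Fin d → ℤ) (m : ℕ) :
    (MSet x j k m).Finite :=
  Set.Finite.subset (Finset.finite_toSet _) (mset_subset x j k m)

lemma mset_ncard_le {d : ℕ} (x : ℕ → Fin d → ℝ) (j : ℤ) (k : Fin d → ℤ) (m : ℕ) :
    (MSet x j k m).ncard ≤ 2 ^ (d * m) := by
  have h := Set.ncard_le_ncard (mset_subset x j k m) (Finset.finite_toSet _)
  rw [Set.ncard_coe_finset] at h
  refine h.trans ?_
  rw [Fintype.card_piFinset]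
  have : ∀ i : Fin d, (Finset.Ico (k i * 2 ^ m) ((k i + 1) * 2 ^ m)).card = 2 ^ m := by
    intro i
    rw [Int.card_Ico]
    have e : (k i + 1) * 2 ^ m - k i * 2 ^ m = ((2 ^ m : ℕ) : ℤ) := by push_cast; ring
    rw [e, Int.toNat_natCast]
  simp only [this, Finset.prod_const, Finset.card_univ, Fintype.card_fin]
  rw [← pow_mul, mul_comm]

def boxSet (d : ℕ) (j : ℤ) (m : ℕ) (k' : Fin d → ℤ) : Set (Fin d → ℝ) :=
  Set.univ.pi fun i => Set.Ioo (((k' i : ℝ) - 1) * 2 ^ (-(j + (m:ℤ))))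
    (((k' i : ℝ) + 2) * 2 ^ (-(j + (m:ℤ))))

lemma volume_boxSet (d : ℕ) (j : ℤ) (m : ℕ) (k' : Fin d → ℤ) :
    volume (boxSet d j m k') = ENNReal.ofReal (3 * 2 ^ (-(j + (m:ℤ)))) ^ d := by
  rw [boxSet, volume_pi_pi]
  have e : ∀ i : Fin d, ((k' i : ℝ) + 2) * 2 ^ (-(j + (m:ℤ)))
      - ((k' i : ℝ) - 1) * 2 ^ (-(j + (m:ℤ))) = 3 * 2 ^ (-(j + (m:ℤ))) := by
    intro i; ring
  simp only [Real.volume_Ioo, e, Finset.prod_const, Finset.card_univ, Fintype.card_fin]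

def collarSet (d : ℕ) (j : ℤ) (k : Fin d → ℤ) (m : ℕ) : Set (Fin d → ℝ) :=
  {y | y ∈ dyadicCube d j k ∧ ∃ i0,
    y i0 < (k i0 : ℝ) * 2 ^ (-j) + 2 ^ (-(j + (m:ℤ))) ∨
    ((k i0 : ℝ) + 1) * 2 ^ (-j) - 2 ^ (-(j + (m:ℤ))) < y i0}

lemma volume_slab {d : ℕ} (j : ℤ) (k : Fin d → ℤ) (i0 : Fin d) (s : Set ℝ) (v : ℝ≥0∞)
    (hvol : volume s = v) :
    volume (Set.univ.pi (Function.update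
        (fun i => Set.Ico ((k i : ℝ) * 2^(-j)) (((k i : ℝ) + 1) * 2^(-j))) i0 s))
      = v * ENNReal.ofReal ((2:ℝ) ^ (-j)) ^ (d - 1) := by
  rw [volume_pi_pi]
  have e : ∀ i : Fin d, volume (Function.update
      (fun i => Set.Ico ((k i : ℝ) * 2^(-j)) (((k i : ℝ) + 1) * 2^(-j))) i0 s i)
      = Function.update (fun i : Fin d => volume
          (Set.Ico ((k i : ℝ) * 2^(-j)) (((k i : ℝ) + 1) * 2^(-j)))) i0 (volume s) i := by
    intro i
    exact Function.apply_update (fun _ t => volume t) _ i0 s i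
  rw [Finset.prod_congr rfl (fun i _ => e i)]
  rw [Finset.prod_update_of_mem (Finset.mem_univ i0), hvol]
  congr 1
  · have hvolI : ∀ i : Fin d, volume (Set.Ico ((k i : ℝ) * 2^(-j)) (((k i : ℝ) + 1) * 2^(-j)))
        = ENNReal.ofReal ((2:ℝ) ^ (-j)) := by
      intro i; rw [Real.volume_Ico]; congr 1; ring
    rw [Finset.prod_congr rfl (fun i _ => hvolI i), Finset.prod_const]
    congr 1
    rw [Finset.card_sdiff_of_subset (Finset.subset_univ _), Finset.card_univ, Fintype.card_fin,
      Finset.card_singleton]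

lemma volume_collarSet (d : ℕ) (j : ℤ) (k : Fin d → ℤ) (m : ℕ) :
    volume (collarSet d j k m) ≤
      (2 * d) * (ENNReal.ofReal (2 ^ (-(j + (m:ℤ)))) * ENNReal.ofReal ((2:ℝ) ^ (-j)) ^ (d - 1)) := by
  classical
  have hsub : collarSet d j k m ⊆ ⋃ i0 : Fin d,
      (Set.univ.pi (Function.update
        (fun i => Set.Ico ((k i : ℝ) * 2^(-j)) (((k i : ℝ) + 1) * 2^(-j))) i0
        (Set.Ico ((k i0 : ℝ) * 2^(-j)) ((k i0 : ℝ) * 2^(-j) + 2 ^ (-(j + (m:ℤ))))))) ∪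
      (Set.univ.pi (Function.update
        (fun i => Set.Ico ((k i : ℝ) * 2^(-j)) (((k i : ℝ) + 1) * 2^(-j))) i0
        (Set.Ioo (((k i0 : ℝ) + 1) * 2^(-j) - 2 ^ (-(j + (m:ℤ)))) (((k i0 : ℝ) + 1) * 2^(-j))))) := by
    rintro y ⟨hy, i0, hcase⟩
    refine Set.mem_iUnion.mpr ⟨i0, ?_⟩
    rcases hcase with hc | hc
    · left
      intro i _
      by_cases hi : i = i0
      · subst hi; rw [Function.update_self]; exact ⟨(hy i).1, hc⟩
      · rw [Function.update_of_ne hi]; exact hy i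
    · right
      intro i _
      by_cases hi : i = i0
      · subst hi; rw [Function.update_self]; exact ⟨hc, (hy i).2⟩
      · rw [Function.update_of_ne hi]; exact hy i
  refine (measure_mono hsub).trans ((measure_iUnion_le _).trans ?_)
  have hCb : ∀ i0 : Fin d, volume (
      (Set.univ.pi (Function.update
        (fun i => Set.Ico ((k i : ℝ) * 2^(-j)) (((k i : ℝ) + 1) * 2^(-j))) i0
        (Set.Ico ((k i0 : ℝ) * 2^(-j)) ((k i0 : ℝ) * 2^(-j) + 2 ^ (-(j + (m:ℤ))))))) ∪
      (Set.univ.pi (Function.update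
        (fun i => Set.Ico ((k i : ℝ) * 2^(-j)) (((k i : ℝ) + 1) * 2^(-j))) i0
        (Set.Ioo (((k i0 : ℝ) + 1) * 2^(-j) - 2 ^ (-(j + (m:ℤ)))) (((k i0 : ℝ) + 1) * 2^(-j))))))
      ≤ 2 * (ENNReal.ofReal (2 ^ (-(j + (m:ℤ)))) * ENNReal.ofReal ((2:ℝ) ^ (-j)) ^ (d - 1)) := by
    intro i0
    refine (measure_union_le _ _).trans ?_
    have v1 := volume_slab j k i0
      (Set.Ico ((k i0 : ℝ) * 2^(-j)) ((k i0 : ℝ) * 2^(-j) + 2 ^ (-(j + (m:ℤ)))))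
      (ENNReal.ofReal (2 ^ (-(j + (m:ℤ)))))
      (by rw [Real.volume_Ico]; congr 1; ring)
    have v2 := volume_slab j k i0
      (Set.Ioo (((k i0 : ℝ) + 1) * 2^(-j) - 2 ^ (-(j + (m:ℤ)))) (((k i0 : ℝ) + 1) * 2^(-j)))
      (ENNReal.ofReal (2 ^ (-(j + (m:ℤ)))))
      (by rw [Real.volume_Ioo]; congr 1; ring)
    rw [v1, v2, ← two_mul]
  refine (ENNReal.tsum_le_tsum hCb).trans ?_
  rw [tsum_fintype]
  rw [Finset.sum_const, Finset.card_univ, Fintype.card_fin, nsmul_eq_mul]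
  rw [← mul_assoc]
  apply le_of_eq
  congr 1
  rw [← mul_comm (2 : ℝ≥0∞) (d : ℝ≥0∞)]

lemma abs_coord_le {d : ℕ} (y z : Fin d → ℝ) (i : Fin d) : |y i - z i| ≤ ‖y - z‖ := by
  have := norm_le_pi_norm (y - z) i
  simpa [Real.norm_eq_abs] using this

lemma cover {d : ℕ} (x : ℕ → Fin d → ℝ) (j : ℤ) (k : Fin d → ℤ) (m n : ℕ)
    (y : Fin d → ℝ) (hy : y ∈ dyadicCube d j k) (hn1 : 1 ≤ n)
    (hn2 : (n:ℝ) ≤ (2:ℝ) ^ ((d:ℤ) * (j + (m:ℤ))))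
    (hnear : ‖y - x n‖ < 2 ^ (-(j + (m:ℤ)))) :
    y ∈ (⋃ k' ∈ MSet x j k m, boxSet d j m k') ∪ collarSet d j k m := by
  have hp : (0:ℝ) < 2 ^ (-(j + (m:ℤ))) := tppos _
  by_cases hx : x n ∈ dyadicCube d j k
  · left
    set k' : Fin d → ℤ := fun i => ⌊x n i * 2^(j + (m:ℤ))⌋ with hk'
    have hxk' : x n ∈ dyadicCube d (j + (m:ℤ)) k' := floor_mem _ (x n)
    have hbounds : ∀ i, (k i : ℝ) * 2^m ≤ k' i ∧ (k' i : ℝ) + 1 ≤ ((k i : ℝ) + 1) * 2^m := by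
      intro i
      rw [mem_dyadicCube_iff] at hx
      obtain ⟨h1, h2⟩ := hx i
      have hm : (0:ℝ) < 2^(m:ℤ) := tppos _
      have e1 : x n i * 2 ^ (j + (m:ℤ)) = (x n i * 2^j) * 2^(m:ℤ) := by rw [mul_assoc, tpa]
      have hcast : ((2:ℝ)^(m:ℤ)) = ((2^m : ℤ) : ℝ) := by rw [zpow_natCast]; norm_cast
      have hl : ((k i * 2^m : ℤ) : ℝ) ≤ x n i * 2^(j + (m:ℤ)) := by
        rw [e1]; push_cast
        calc ((k i : ℝ)) * 2^m = (k i : ℝ) * 2^(m:ℤ) := by rw [zpow_natCast]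
        _ ≤ (x n i * 2^j) * 2^(m:ℤ) := by nlinarith
      have hu : x n i * 2^(j + (m:ℤ)) < (((k i + 1) * 2^m : ℤ) : ℝ) := by
        rw [e1]; push_cast
        calc (x n i * 2^j) * 2^(m:ℤ) < ((k i : ℝ) + 1) * 2^(m:ℤ) := by nlinarith
        _ = ((k i : ℝ) + 1) * 2^m := by rw [zpow_natCast]
      have hfl : (k i * 2^m : ℤ) ≤ k' i := Int.le_floor.mpr hl
      have hfu : k' i < (k i + 1) * 2^m := Int.floor_lt.mpr hu
      constructor
      · exact_mod_cast hfl
      · exact_mod_cast by push_cast; exact_mod_cast hfu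
    have hmem : k' ∈ MSet x j k m := ⟨cube_subset hbounds, n, hn1, hn2, hxk'⟩
    refine Set.mem_biUnion hmem ?_
    intro i _
    have hxi := hxk' i
    have habs := abs_lt.mp (lt_of_le_of_lt (abs_coord_le y (x n) i) hnear)
    constructor
    · have : ((k' i : ℝ) - 1) * 2 ^ (-(j + (m:ℤ)))
          = (k' i : ℝ) * 2 ^ (-(j + (m:ℤ))) - 2 ^ (-(j + (m:ℤ))) := by ring
      rw [this]; linarith [hxi.1, habs.1]
    · have : ((k' i : ℝ) + 2) * 2 ^ (-(j + (m:ℤ)))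
          = ((k' i : ℝ) + 1) * 2 ^ (-(j + (m:ℤ))) + 2 ^ (-(j + (m:ℤ))) := by ring
      rw [this]; linarith [hxi.2, habs.2]
  · right
    simp only [dyadicCube, Set.mem_setOf_eq, not_forall] at hx
    obtain ⟨i0, hi0⟩ := hx
    refine ⟨hy, i0, ?_⟩
    have habs := abs_lt.mp (lt_of_le_of_lt (abs_coord_le y (x n) i0) hnear)
    rcases not_and_or.mp hi0 with h | h
    · left; push_neg at h; linarith [habs.2]
    · right; push_neg at h; linarith [habs.1]

lemma volume_B {d : ℕ} (x : ℕ → Fin d → ℝ) (j : ℤ) (k : Fin d → ℤ) (m : ℕ) :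
    volume ((⋃ k' ∈ MSet x j k m, boxSet d j m k') ∪ collarSet d j k m)
      ≤ ENNReal.ofReal (((MSet x j k m).ncard) * (3 * 2^(-(j+(m:ℤ))))^d
          + (2*d) * (2^(-(j+(m:ℤ))) * ((2:ℝ)^(-j))^(d-1))) := by
  have hp : (0:ℝ) < 2 ^ (-(j + (m:ℤ))) := tppos _
  have hq : (0:ℝ) < 2 ^ (-j) := tppos _
  refine (measure_union_le _ _).trans ?_
  rw [ENNReal.ofReal_add (by positivity) (by positivity)]
  refine add_le_add ?_ ?_
  · have hfin := mset_finite x j k m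
    have he : (⋃ k' ∈ MSet x j k m, boxSet d j m k')
        = ⋃ k' ∈ hfin.toFinset, boxSet d j m k' := by
      ext y; simp [Set.Finite.mem_toFinset]
    rw [he]
    refine (measure_biUnion_finset_le _ _).trans ?_
    have : ∀ k' ∈ hfin.toFinset, volume (boxSet d j m k')
        = ENNReal.ofReal (3 * 2 ^ (-(j + (m:ℤ)))) ^ d := fun k' _ => volume_boxSet d j m k'
    rw [Finset.sum_congr rfl this, Finset.sum_const, nsmul_eq_mul]
    have hcard : hfin.toFinset.card = (MSet x j k m).ncard := by
      rw [Set.ncard_eq_toFinset_card _ hfin]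
    rw [hcard]
    apply le_of_eq
    rw [← ENNReal.ofReal_natCast ((MSet x j k m).ncard),
      ← ENNReal.ofReal_pow (by positivity),
      ← ENNReal.ofReal_mul (by positivity)]
  · refine (volume_collarSet d j k m).trans ?_
    apply le_of_eq
    have h2d : (2 * (d:ℝ≥0∞)) = ((2*d : ℕ) : ℝ≥0∞) := by push_cast; ring
    rw [← ENNReal.ofReal_pow (by positivity : (0:ℝ) ≤ 2^(-j)),
      ← ENNReal.ofReal_mul (by positivity), h2d,
      ← ENNReal.ofReal_natCast (2*d),
      ← ENNReal.ofReal_mul (by positivity)]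
    congr 1
    push_cast
    ring

lemma freq_small {d : ℕ} {x : ℕ → Fin d → ℝ} {j : ℤ} {k : Fin d → ℤ}
    (hliminf : Filter.liminf
      (fun m : ℕ => ((MSet x j k m).ncard : ℝ) / 2 ^ (d * m)) atTop = 0) :
    ∀ ε : ℝ, 0 < ε → ∀ b : ℕ, ∃ m, b ≤ m ∧ ((MSet x j k m).ncard : ℝ) / 2 ^ (d * m) < ε := by
  set a : ℕ → ℝ := fun m => ((MSet x j k m).ncard : ℝ) / 2 ^ (d * m) with ha
  have ha1 : ∀ m, a m ≤ 1 := by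
    intro m
    rw [ha]
    simp only
    rw [div_le_one (by positivity)]
    have := mset_ncard_le x j k m
    exact_mod_cast this
  intro ε hε b
  by_contra hcon
  push_neg at hcon
  have hmem : ε ∈ {c : ℝ | ∀ᶠ m in atTop, c ≤ a m} := by
    rw [Set.mem_setOf_eq, eventually_atTop]
    exact ⟨b, hcon⟩
  have hbdd : BddAbove {c : ℝ | ∀ᶠ m in atTop, c ≤ a m} := by
    refine ⟨1, fun c hc => ?_⟩
    obtain ⟨m, hm⟩ := hc.exists
    exact hm.trans (ha1 m)
  have : ε ≤ liminf a atTop := by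
    rw [Filter.liminf_eq]
    exact le_csSup hbdd hmem
  rw [hliminf] at this
  linarith

/-- Necessary condition for uniform eutaxy: if some dyadic cube `λ ⊆ U` satisfies
`liminf_j 2^{-dj} #M((x_n); λ, j) = 0`, then `(x_n)` is not uniformly eutaxic in `U`. -/
theorem stmt13 (d : ℕ) (hd : 1 ≤ d) (U : Set (Fin d → ℝ))
    (hUopen : IsOpen U) (hUne : U.Nonempty) (x : ℕ → Fin d → ℝ)
    (j : ℤ) (k : Fin d → ℤ) (hsub : dyadicCube d j k ⊆ U)
    (hliminf : Filter.liminf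
      (fun m : ℕ => ((MSet x j k m).ncard : ℝ) / 2 ^ (d * m)) atTop = 0) :
    ¬ UnifEutaxic x U := by
  classical
  intro hU
  set a : ℕ → ℝ := fun m => ((MSet x j k m).ncard : ℝ) / 2 ^ (d * m) with ha
  have hfreq : ∀ i : ℕ, ∀ b : ℕ, ∃ m, b ≤ m ∧ a m < (2:ℝ)⁻¹ ^ i := by
    intro i b
    exact freq_small hliminf ((2:ℝ)⁻¹ ^ i) (by positivity) b
  choose g hg1 hg2 using hfreq
  set b0 : ℕ := (2 - j).toNat with hb0
  set msq : ℕ → ℕ := fun i => Nat.rec (g 0 b0) (fun i mi => g (i+1) (mi+1)) i with hmsq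
  have hm0 : msq 0 = g 0 b0 := rfl
  have hms : ∀ i, msq (i+1) = g (i+1) (msq i + 1) := fun _ => rfl
  have hmstrict : StrictMono msq := by
    apply strictMono_nat_of_lt_succ
    intro i
    have := hg1 (i+1) (msq i + 1)
    rw [hms i]
    omega
  have hmge : ∀ i, i ≤ msq i := fun i => hmstrict.le_apply
  have hmb0 : ∀ i, b0 ≤ msq i := by
    intro i
    have h1 : b0 ≤ msq 0 := by rw [hm0]; exact hg1 0 b0
    exact h1.trans (hmstrict.monotone (Nat.zero_le i))
  have hai : ∀ i, a (msq i) < (2:ℝ)⁻¹ ^ i := by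
    intro i
    cases i with
    | zero => rw [hm0]; exact hg2 0 b0
    | succ i => rw [hms i]; exact hg2 (i+1) (msq i + 1)
  -- the scales
  set X : ℕ → ℝ := fun i => (2:ℝ) ^ ((d:ℤ) * (j + (msq i : ℤ))) with hX
  have hXpos : ∀ i, 0 < X i := fun i => tppos _
  have hexp2 : ∀ i, (2:ℤ) ≤ (d:ℤ) * (j + (msq i : ℤ)) := by
    intro i
    have h1 : (2:ℤ) - j ≤ (b0 : ℤ) := Int.self_le_toNat _
    have h2 : (b0 : ℤ) ≤ (msq i : ℤ) := by exact_mod_cast hmb0 i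
    have h3 : (2:ℤ) ≤ j + (msq i : ℤ) := by omega
    have h4 : (1:ℤ) ≤ (d:ℤ) := by exact_mod_cast hd
    nlinarith
  have hX4 : ∀ i, 4 ≤ X i := by
    intro i
    have := zpow_le_zpow_right₀ (one_le_two : (1:ℝ) ≤ 2) (hexp2 i)
    rw [hX]
    calc (4:ℝ) = 2 ^ (2:ℤ) := by norm_num
    _ ≤ _ := this
  have hXdouble : ∀ i, 2 * X i ≤ X (i+1) := by
    intro i
    have hδ : (1:ℤ) ≤ (d:ℤ) * ((msq (i+1) : ℤ) - (msq i : ℤ)) := by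
      have h1 : msq i + 1 ≤ msq (i+1) := hmstrict (Nat.lt_succ_self i)
      have h2 : (msq i : ℤ) + 1 ≤ (msq (i+1) : ℤ) := by exact_mod_cast h1
      have h4 : (1:ℤ) ≤ (d:ℤ) := by exact_mod_cast hd
      nlinarith
    have he : (d:ℤ) * (j + (msq (i+1) : ℤ))
        = (d:ℤ) * (j + (msq i : ℤ)) + (d:ℤ) * ((msq (i+1) : ℤ) - (msq i : ℤ)) := by ring
    rw [hX]
    simp only
    rw [he, ← tpa]
    have h2 : (2:ℝ) ≤ 2 ^ ((d:ℤ) * ((msq (i+1) : ℤ) - (msq i : ℤ))) := by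
      calc (2:ℝ) = 2 ^ (1:ℤ) := by norm_num
      _ ≤ _ := zpow_le_zpow_right₀ one_le_two hδ
    have := hXpos i
    rw [hX] at this
    nlinarith [this]
  set N : ℕ → ℕ := fun i => ⌊X i⌋₊ with hN
  have hNX : ∀ i, (N i : ℝ) ≤ X i := fun i => Nat.floor_le (hXpos i).le
  have hXN : ∀ i, X i - 1 < (N i : ℝ) := fun i => Nat.sub_one_lt_floor (X i)
  have hNstrict : StrictMono N := by
    apply strictMono_nat_of_lt_succ
    intro i
    have h1 : (N i : ℝ) < (N (i+1) : ℝ) := by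
      have := hXdouble i
      have := hX4 i
      have := hNX i
      have := hXN (i+1)
      linarith
    exact_mod_cast h1
  have hex : ∀ n : ℕ, ∃ i, n ≤ N i := fun n => ⟨n, hNstrict.le_apply⟩
  set idx : ℕ → ℕ := fun n => Nat.find (hex n) with hidx
  have hidx1 : ∀ n, n ≤ N (idx n) := fun n => Nat.find_spec (hex n)
  have hidxle : ∀ n i, n ≤ N i → idx n ≤ i := fun n i h => Nat.find_min' (hex n) h
  have hidxmin : ∀ n i, i < idx n → ¬ (n ≤ N i) := fun n i h => Nat.find_min (hex n) h
  have hidxmono : Monotone idx := by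
    intro n n' hnn'
    exact hidxle n (idx n') (hnn'.trans (hidx1 n'))
  set r : ℕ → ℝ := fun n => (2:ℝ) ^ (-(j + (msq (idx n) : ℤ))) with hr
  have hrpos : ∀ n, 0 < r n := fun n => tppos _
  have hrmono : ∀ n, r (n + 1) ≤ r n := by
    intro n
    have h1 : msq (idx n) ≤ msq (idx (n+1)) := hmstrict.monotone (hidxmono (Nat.le_succ n))
    have h2 : (-(j + (msq (idx (n+1)) : ℤ))) ≤ (-(j + (msq (idx n) : ℤ))) := by
      have : (msq (idx n) : ℤ) ≤ (msq (idx (n+1)) : ℤ) := by exact_mod_cast h1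
      omega
    exact zpow_le_zpow_right₀ one_le_two h2
  have hidxtendsto : Tendsto idx atTop atTop := by
    rw [tendsto_atTop_atTop]
    intro b
    refine ⟨N b + 1, fun n hn => ?_⟩
    by_contra hlt
    push_neg at hlt
    have : n ≤ N b := (hidx1 n).trans (hNstrict.monotone hlt.le)
    omega
  have hrle : ∀ n, r n ≤ (2:ℝ) ^ (-j) * (2⁻¹) ^ (idx n) := by
    intro n
    rw [hr]
    simp only
    rw [show (-(j + (msq (idx n) : ℤ))) = (-j) + (-(msq (idx n) : ℤ)) by ring, ← tpa]
    have h1 : (2:ℝ) ^ (-(msq (idx n) : ℤ)) ≤ (2:ℝ) ^ (-(idx n : ℤ)) :=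
      zpow_le_zpow_right₀ one_le_two (by have := hmge (idx n); omega)
    have h2 : (2:ℝ) ^ (-(idx n : ℤ)) = (2⁻¹) ^ (idx n) := by
      rw [zpow_neg, zpow_natCast, inv_pow]
    exact mul_le_mul_of_nonneg_left (le_of_le_of_eq h1 h2) (tppos (-j)).le
  have hrtendsto : Tendsto r atTop (𝓝 0) := by
    have hpow : Tendsto (fun q : ℕ => ((2:ℝ)⁻¹) ^ q) atTop (𝓝 0) :=
      tendsto_pow_atTop_nhds_zero_of_lt_one (by norm_num) (by norm_num)
    have hg : Tendsto (fun n => (2:ℝ) ^ (-j) * (2⁻¹) ^ (idx n)) atTop (𝓝 0) := by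
      have := (hpow.comp hidxtendsto).const_mul ((2:ℝ) ^ (-j))
      simpa using this
    exact squeeze_zero (fun n => (hrpos n).le) hrle hg
  have hrsum : ¬ Summable (fun n => r n ^ d) := by
    intro hS
    have hterm : ∀ n, 0 ≤ r n ^ d := fun n => by positivity
    have hval : ∀ i n, n ∈ Finset.Ioc (N i) (N (i+1)) → r n ^ d = (X (i+1))⁻¹ := by
      intro i n hn
      rw [Finset.mem_Ioc] at hn
      have hidxeq : idx n = i + 1 := by
        have hle : idx n ≤ i + 1 := hidxle n (i+1) hn.2
        have hgt : ¬ idx n ≤ i := by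
          intro hle'
          have : n ≤ N i := (hidx1 n).trans (hNstrict.monotone hle')
          omega
        omega
      rw [hr]
      simp only [hidxeq]
      rw [← zpow_natCast ((2:ℝ) ^ (-(j + (msq (i+1) : ℤ)))) d, ← zpow_mul, hX]
      simp only
      rw [← zpow_neg]
      congr 1
      ring
    have hblock : ∀ i, (4:ℝ)⁻¹ ≤ ∑ n ∈ Finset.Ioc (N i) (N (i+1)), r n ^ d := by
      intro i
      rw [Finset.sum_congr rfl (hval i), Finset.sum_const, Nat.card_Ioc, nsmul_eq_mul]
      have hY := hXpos (i+1)
      have h4 := hX4 (i+1)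
      have hc : ((N (i+1) - N i : ℕ) : ℝ) = (N (i+1) : ℝ) - N i :=
        Nat.cast_sub (hNstrict.monotone (Nat.le_succ i))
      rw [hc]
      have h1 : X (i+1) / 4 ≤ (N (i+1) : ℝ) - N i := by
        have := hXN (i+1)
        have := hNX i
        have := hXdouble i
        have := hXpos i
        linarith
      calc (4:ℝ)⁻¹ = (X (i+1) / 4) * (X (i+1))⁻¹ := by field_simp
      _ ≤ _ := mul_le_mul_of_nonneg_right h1 (by positivity)
    have hpartial : ∀ I : ℕ, (I : ℝ) * 4⁻¹ ≤ ∑ n ∈ Finset.Ioc (N 0) (N I), r n ^ d := by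
      intro I
      induction I with
      | zero => simp
      | succ I ih =>
        rw [← Finset.sum_Ioc_consecutive _ (hNstrict.monotone (Nat.zero_le I))
            (hNstrict.monotone (Nat.le_succ I))]
        push_cast
        have := hblock I
        linarith
    obtain ⟨I, hI⟩ := exists_nat_gt ((∑' n, r n ^ d) * 4)
    have h2 := hpartial I
    have h3 : ∑ n ∈ Finset.Ioc (N 0) (N I), r n ^ d ≤ ∑' n, r n ^ d :=
      hS.sum_le_tsum _ (fun n _ => hterm n)
    nlinarith
  have hrPd : r ∈ Pd d := ⟨hrpos, hrmono, hrtendsto, hrsum⟩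
  -- the bad sets
  set Bs : ℕ → Set (Fin d → ℝ) := fun i =>
    (⋃ k' ∈ MSet x j k (msq i), boxSet d j (msq i) k') ∪ collarSet d j k (msq i) with hBs
  have hvolB : ∀ i, volume (Bs i)
      ≤ ENNReal.ofReal ((3 ^ d * ((2:ℝ) ^ (-j)) ^ d + 2 * d * ((2:ℝ) ^ (-j)) ^ d) * (2⁻¹) ^ i) := by
    intro i
    refine (volume_B x j k (msq i)).trans (ENNReal.ofReal_le_ofReal ?_)
    set m : ℕ := msq i with hm
    have h'pos : (0:ℝ) < 2 ^ (-(j + (m:ℤ))) := tppos _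
    have hpos : (0:ℝ) < 2 ^ (-j) := tppos _
    have hncard : ((MSet x j k m).ncard : ℝ) = a m * 2 ^ (d * m) := by
      rw [ha]
      field_simp
    have ham : 0 ≤ a m := by rw [ha]; positivity
    have hkey1 : ((2:ℝ) ^ (-(j + (m:ℤ)))) ^ d * 2 ^ (d * m) = ((2:ℝ) ^ (-j)) ^ d := by
      rw [← zpow_natCast ((2:ℝ) ^ (-(j + (m:ℤ)))) d, ← zpow_mul,
          ← zpow_natCast (2:ℝ) (d * m), ← zpow_natCast ((2:ℝ) ^ (-j)) d, ← zpow_mul, tpa]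
      congr 1
      push_cast
      ring
    have t1 : ((MSet x j k m).ncard : ℝ) * (3 * 2 ^ (-(j + (m:ℤ)))) ^ d
        ≤ 3 ^ d * ((2:ℝ) ^ (-j)) ^ d * (2⁻¹) ^ i := by
      rw [hncard, mul_pow]
      calc a m * 2 ^ (d * m) * ((3:ℝ) ^ d * (2 ^ (-(j + (m:ℤ)))) ^ d)
          = a m * (3 ^ d * ((2 ^ (-(j + (m:ℤ)))) ^ d * 2 ^ (d * m))) := by ring
      _ = a m * (3 ^ d * ((2:ℝ) ^ (-j)) ^ d) := by rw [hkey1]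
      _ ≤ (2⁻¹) ^ i * (3 ^ d * ((2:ℝ) ^ (-j)) ^ d) :=
          mul_le_mul_of_nonneg_right (hai i).le (by positivity)
      _ = 3 ^ d * ((2:ℝ) ^ (-j)) ^ d * (2⁻¹) ^ i := by ring
    have hkey2 : (2:ℝ) ^ (-(j + (m:ℤ))) * ((2:ℝ) ^ (-j)) ^ (d-1)
        ≤ (2⁻¹) ^ i * ((2:ℝ) ^ (-j)) ^ d := by
      have e1 : (2:ℝ) ^ (-(j + (m:ℤ))) = 2 ^ (-(m:ℤ)) * 2 ^ (-j) := by
        rw [tpa]; congr 1; ring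
      have e2 : (2:ℝ) ^ (-(m:ℤ)) ≤ (2⁻¹) ^ i := by
        rw [show ((2:ℝ)⁻¹) ^ i = 2 ^ (-(i:ℤ)) from by rw [zpow_neg, zpow_natCast, inv_pow]]
        refine zpow_le_zpow_right₀ one_le_two ?_
        have := hmge i
        rw [hm]
        omega
      have e3 : (2:ℝ) ^ (-j) * ((2:ℝ) ^ (-j)) ^ (d-1) = ((2:ℝ) ^ (-j)) ^ d := by
        rw [mul_comm, ← pow_succ]
        congr 1
        omega
      calc (2:ℝ) ^ (-(j + (m:ℤ))) * ((2:ℝ) ^ (-j)) ^ (d-1)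
          = 2 ^ (-(m:ℤ)) * ((2:ℝ) ^ (-j) * ((2:ℝ) ^ (-j)) ^ (d-1)) := by rw [e1]; ring
      _ = 2 ^ (-(m:ℤ)) * ((2:ℝ) ^ (-j)) ^ d := by rw [e3]
      _ ≤ (2⁻¹) ^ i * ((2:ℝ) ^ (-j)) ^ d :=
          mul_le_mul_of_nonneg_right e2 (by positivity)
    have t2 : 2 * (d:ℝ) * (2 ^ (-(j + (m:ℤ))) * ((2:ℝ) ^ (-j)) ^ (d-1))
        ≤ 2 * d * ((2:ℝ) ^ (-j)) ^ d * (2⁻¹) ^ i := by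
      calc 2 * (d:ℝ) * (2 ^ (-(j + (m:ℤ))) * ((2:ℝ) ^ (-j)) ^ (d-1))
          ≤ 2 * (d:ℝ) * ((2⁻¹) ^ i * ((2:ℝ) ^ (-j)) ^ d) :=
            mul_le_mul_of_nonneg_left hkey2 (by positivity)
      _ = 2 * d * ((2:ℝ) ^ (-j)) ^ d * (2⁻¹) ^ i := by ring
    have hexpand : (3 ^ d * ((2:ℝ) ^ (-j)) ^ d + 2 * d * ((2:ℝ) ^ (-j)) ^ d) * (2⁻¹) ^ i
        = 3 ^ d * ((2:ℝ) ^ (-j)) ^ d * (2⁻¹) ^ i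
          + 2 * d * ((2:ℝ) ^ (-j)) ^ d * (2⁻¹) ^ i := by ring
    rw [hexpand]
    exact add_le_add t1 t2
  have htsum : (∑' i, volume (Bs i)) ≠ ⊤ := by
    have hle := ENNReal.tsum_le_tsum hvolB
    refine ne_top_of_le_ne_top ?_ hle
    have hC0 : (0:ℝ) ≤ 3 ^ d * ((2:ℝ) ^ (-j)) ^ d + 2 * d * ((2:ℝ) ^ (-j)) ^ d := by positivity
    have heq : ∀ i : ℕ, ENNReal.ofReal ((3 ^ d * ((2:ℝ) ^ (-j)) ^ d
          + 2 * d * ((2:ℝ) ^ (-j)) ^ d) * (2⁻¹) ^ i)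
        = ENNReal.ofReal (3 ^ d * ((2:ℝ) ^ (-j)) ^ d + 2 * d * ((2:ℝ) ^ (-j)) ^ d)
            * (ENNReal.ofReal 2⁻¹) ^ i := by
      intro i
      rw [ENNReal.ofReal_mul hC0, ENNReal.ofReal_pow (by norm_num)]
    rw [tsum_congr heq, ENNReal.tsum_mul_left, ENNReal.tsum_geometric]
    have h12 : ENNReal.ofReal (2⁻¹:ℝ) = 2⁻¹ := by
      rw [ENNReal.ofReal_inv_of_pos (by norm_num)]
      norm_num
    rw [h12, ENNReal.one_sub_inv_two]
    refine ENNReal.mul_ne_top ENNReal.ofReal_ne_top ?_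
    simp
  have hBC : volume {y | ∃ᶠ i in atTop, y ∈ Bs i} = 0 :=
    measure_setOf_frequently_eq_zero htsum
  -- eutaxy gives a.e. infinite hits
  have hae := hU r hrPd
  rw [Eutaxic, ae_iff, Measure.restrict_apply' hUopen.measurableSet] at hae
  -- the cube is covered by two null sets
  have hcover : dyadicCube d j k ⊆ {y | ∃ᶠ i in atTop, y ∈ Bs i}
      ∪ ({y | ¬ {n : ℕ | 1 ≤ n ∧ ‖y - x n‖ < r n}.Infinite} ∩ U) := by
    intro y hy
    by_cases hinf : {n : ℕ | 1 ≤ n ∧ ‖y - x n‖ < r n}.Infinite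
    · left
      rw [Set.mem_setOf_eq, frequently_atTop]
      intro I
      obtain ⟨n, hn, hnN⟩ := hinf.exists_gt (N I)
      refine ⟨idx n, ?_, ?_⟩
      · by_contra hlt
        push_neg at hlt
        have : n ≤ N I := (hidx1 n).trans (hNstrict.monotone hlt.le)
        omega
      · refine cover x j k (msq (idx n)) n y hy hn.1 ?_ hn.2
        calc (n:ℝ) ≤ (N (idx n) : ℝ) := by exact_mod_cast hidx1 n
        _ ≤ X (idx n) := hNX _
    · right
      exact ⟨hinf, hsub hy⟩
  have hzero : volume (dyadicCube d j k) = 0 := by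
    refine le_antisymm ?_ zero_le
    calc volume (dyadicCube d j k) ≤ volume ({y | ∃ᶠ i in atTop, y ∈ Bs i}
        ∪ ({y | ¬ {n : ℕ | 1 ≤ n ∧ ‖y - x n‖ < r n}.Infinite} ∩ U)) := measure_mono hcover
    _ ≤ volume {y | ∃ᶠ i in atTop, y ∈ Bs i}
        + volume ({y | ¬ {n : ℕ | 1 ≤ n ∧ ‖y - x n‖ < r n}.Infinite} ∩ U) := measure_union_le _ _
    _ = 0 := by rw [hBC, hae]; simp
  rw [volume_dyadicCube] at hzero
  have : ENNReal.ofReal ((2:ℝ) ^ (-j)) ≠ 0 := by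
    simp [ENNReal.ofReal_eq_zero, not_le, tppos j]
  exact this (pow_eq_zero_iff (by omega)|>.mp hzero)
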